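/- Let k be a field and f a k-linear endomorphism of V = k((t)). Suppose n₁ ≤ m₁ and n₂ ≤ m₂ are integers such that, for each i = 1, 2, the range of f is contained in the standard lattice L_{n_i} and L_{m_i} is contained in the kernel of f. Then f induces k-linear endomorphisms f̄_i of the finite-dimensional quotient spaces L_{n_i}/L_{m_i}, and the ordinary traces agree: trace(f̄₁) = trace(f̄₂). Consequently the Tate trace τ(f), defined as the trace of the endomorphism induced by f on L_n/L_m for any integers n ≤ m with range f ⊆ L_n and L_m ⊆ ker f, is well defined. -/

import Mathlib

/-!
In the coefficient basis `tⁱ`, `n ≤ i < m`, of `L n / L m`, the trace of the induced endomorphism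
is `∑ i ∈ [n, m), aᵢᵢ` with `aᵢᵢ` the coefficient of `tⁱ` in `f tⁱ`. Since the range of `f`
lies in `L n`, `aᵢᵢ = 0` for `i < n`; since `L m ⊆ ker f`, `aᵢᵢ = 0` for `i ≥ m`. So the trace
is the finite sum of all diagonal coefficients of `f`, which does not depend on `n` and `m`.
-/

open HahnSeries

section AbstractQuotient

variable {k : Type*} [Field k] {V : Type*} [AddCommGroup V] [Module k V]

/-- The endomorphism induced on the quotient `p / q` (realized as `↥p ⧸ q ∩ p`) by an
endomorphism `f` whose range is contained in `p` and which vanishes on `q`. -/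
noncomputable def inducedQuotientEndo (f : Module.End k V) (p q : Submodule k V)
    (hr : ∀ v : V, f v ∈ p) (hk : ∀ v ∈ q, f v = 0) :
    Module.End k (↥p ⧸ q.comap p.subtype) :=
  Submodule.mapQ _ _ (f.restrict (fun v _ => hr v)) (by
    intro x hx
    have hfx : f (x : V) = 0 := hk _ (Submodule.mem_comap.mp hx)
    simp only [Submodule.mem_comap, LinearMap.restrict_apply]
    show f (x : V) ∈ q
    rw [hfx]
    exact q.zero_mem)

/-- The quotient `p / q` (realized as `↥p ⧸ q ∩ p`) is a finite-dimensional
`k`-vector space. -/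
abbrev QuotFiniteDimensional (p q : Submodule k V) : Prop :=
  FiniteDimensional k (↥p ⧸ q.comap p.subtype)

end AbstractQuotient

variable (k : Type*) [Field k]

/-- The standard lattice `L n ⊆ k((t))`: Laurent series whose coefficients vanish in
all degrees `< n`.  In particular `L 0 = k[[t]]`. -/
def standardLattice (n : ℤ) : Submodule k (LaurentSeries k) where
  carrier := {f | ∀ m : ℤ, m < n → f.coeff m = 0}
  add_mem' := by
    intro a b ha hb m hm
    simp [HahnSeries.coeff_add, ha m hm, hb m hm]
  zero_mem' := by intro m hm; simp
  smul_mem' := by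
    intro c a ha m hm
    simp [HahnSeries.coeff_smul, ha m hm]

theorem LinearMap.trace_eq_sum_of_equivFun {R M ι : Type*} [CommRing R] [AddCommGroup M]
    [Module R M] [Fintype ι] [DecidableEq ι] (g : Module.End R M) (e : M ≃ₗ[R] ι → R) :
    LinearMap.trace R M g = ∑ i, e (g (e.symm (Pi.single i 1))) i := by
  simp [LinearMap.trace_eq_matrix_trace R (Module.Basis.ofEquivFun e), Matrix.trace,
    LinearMap.toMatrix_apply, Module.Basis.coe_ofEquivFun]

section StandardLattice

variable {k}

theorem single_mem_standardLattice {n i : ℤ} (h : n ≤ i) (c : k) :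
    single i c ∈ standardLattice k n :=
  fun _ hj => coeff_single_of_ne (hj.trans_le h).ne

namespace standardLattice

noncomputable def coeffs (n m : ℤ) : standardLattice k n →ₗ[k] (Finset.Ico n m → k) :=
  LinearMap.pi fun i => (coeff.linearMap (i : ℤ)).comp (standardLattice k n).subtype

@[simp]
theorem coeffs_apply {n m : ℤ} (x : standardLattice k n) (i : Finset.Ico n m) :
    coeffs n m x i = (x : LaurentSeries k).coeff i :=
  rfl

theorem ker_coeffs (n m : ℤ) :
    LinearMap.ker (coeffs (k := k) n m) =
      (standardLattice k m).comap (standardLattice k n).subtype := by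
  ext x
  simp only [LinearMap.mem_ker, Submodule.mem_comap, Submodule.coe_subtype, funext_iff]
  refine ⟨fun h j hj => ?_, fun h j => h j (Finset.mem_Ico.1 j.2).2⟩
  rcases lt_or_ge j n with hjn | hjn
  · exact x.2 j hjn
  · exact h ⟨j, Finset.mem_Ico.2 ⟨hjn, hj⟩⟩

theorem coeffs_single {n m : ℤ} (i : Finset.Ico n m) :
    coeffs n m ⟨single (i : ℤ) (1 : k), single_mem_standardLattice (Finset.mem_Ico.1 i.2).1 1⟩ =
      Pi.single i 1 := by
  ext j
  rw [coeffs_apply, coeff_single, Pi.single_apply]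
  simp only [Subtype.coe_inj]

theorem surjective_coeffs (n m : ℤ) : Function.Surjective (coeffs (k := k) n m) := by
  rw [← LinearMap.range_eq_top, eq_top_iff, ← (Pi.basisFun k _).span_eq, Submodule.span_le]
  rintro _ ⟨i, rfl⟩
  exact ⟨_, by simpa using coeffs_single i⟩

noncomputable def quotEquiv (n m : ℤ) :
    (standardLattice k n ⧸ (standardLattice k m).comap (standardLattice k n).subtype) ≃ₗ[k]
      (Finset.Ico n m → k) :=
  (Submodule.quotEquivOfEq _ _ (ker_coeffs n m).symm).trans
    ((coeffs n m).quotKerEquivOfSurjective (surjective_coeffs n m))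

@[simp]
theorem quotEquiv_mk {n m : ℤ} (x : standardLattice k n) :
    quotEquiv n m (Submodule.Quotient.mk x) = coeffs n m x :=
  rfl

theorem quotEquiv_symm_single {n m : ℤ} (i : Finset.Ico n m) :
    (quotEquiv n m).symm (Pi.single i 1) =
      Submodule.Quotient.mk ⟨single (i : ℤ) (1 : k),
        single_mem_standardLattice (Finset.mem_Ico.1 i.2).1 1⟩ := by
  rw [LinearEquiv.symm_apply_eq, quotEquiv_mk, coeffs_single]

end standardLattice

/-- The `i`-th diagonal entry of the matrix of `f` in the topological basis `(tⁱ)`. -/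
noncomputable def diagCoeff (f : Module.End k (LaurentSeries k)) (i : ℤ) : k :=
  (f (single i 1)).coeff i

theorem support_diagCoeff_subset {f : Module.End k (LaurentSeries k)} {n m : ℤ}
    (hr : ∀ v, f v ∈ standardLattice k n) (hk : ∀ v ∈ standardLattice k m, f v = 0) :
    Function.support (diagCoeff f) ⊆ Finset.Ico n m := by
  intro i hi
  rw [Finset.coe_Ico, Set.mem_Ico]
  refine ⟨not_lt.1 fun hin => hi (hr _ i hin), not_le.1 fun hmi => hi ?_⟩
  simp [diagCoeff, hk _ (single_mem_standardLattice hmi 1)]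

theorem trace_inducedQuotientEndo_eq_finsum_diagCoeff (f : Module.End k (LaurentSeries k))
    {n m : ℤ} (hr : ∀ v, f v ∈ standardLattice k n) (hk : ∀ v ∈ standardLattice k m, f v = 0) :
    LinearMap.trace k _
        (inducedQuotientEndo f (standardLattice k n) (standardLattice k m) hr hk) =
      ∑ᶠ i, diagCoeff f i := by
  classical
  rw [LinearMap.trace_eq_sum_of_equivFun _ (standardLattice.quotEquiv n m),
    finsum_eq_sum_of_support_subset _ (support_diagCoeff_subset hr hk),
    ← Finset.sum_coe_sort (Finset.Ico n m)]
  refine Finset.sum_congr rfl fun i _ => ?_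
  rw [standardLattice.quotEquiv_symm_single]
  rfl

end StandardLattice

theorem trace_inducedQuotientEndo_welldefined
    (f : Module.End k (LaurentSeries k)) (n₁ m₁ n₂ m₂ : ℤ)
    (hr₁ : ∀ v : LaurentSeries k, f v ∈ standardLattice k n₁)
    (hk₁ : ∀ v ∈ standardLattice k m₁, f v = 0)
    (hr₂ : ∀ v : LaurentSeries k, f v ∈ standardLattice k n₂)
    (hk₂ : ∀ v ∈ standardLattice k m₂, f v = 0) :
    QuotFiniteDimensional (standardLattice k n₁) (standardLattice k m₁) ∧
    QuotFiniteDimensional (standardLattice k n₂) (standardLattice k m₂) ∧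
    LinearMap.trace k _
        (inducedQuotientEndo f (standardLattice k n₁) (standardLattice k m₁) hr₁ hk₁) =
      LinearMap.trace k _
        (inducedQuotientEndo f (standardLattice k n₂) (standardLattice k m₂) hr₂ hk₂) := by
  refine ⟨.equiv (standardLattice.quotEquiv n₁ m₁).symm,
    .equiv (standardLattice.quotEquiv n₂ m₂).symm, ?_⟩
  rw [trace_inducedQuotientEndo_eq_finsum_diagCoeff, trace_inducedQuotientEndo_eq_finsum_diagCoeff]
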